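/- arXiv:1202.4858 — 2 statements merged into one kernel-verified Lean document; each statement's English description precedes it below -/
import Mathlib

section
/- Consider the initial value problem -p² u''(x) + q(x) u(x) = λ u(x) on [a,b] with u(a) = c₀, u'(a) = c₁, where p ≠ 0 is real, q : [a,b] → ℝ is continuous, and λ ∈ ℂ. Then this problem has a unique solution u(·, λ) on [a,b], and for each fixed x ∈ [a,b], the map λ ↦ u(x, λ) is an entire (holomorphic everywhere) function of λ. -/
/-! Writing `Y = (u, u')`, the equation is the first-order system `Y' = A(λ, x) Y` with
`A(λ, x) (u, v) = (v, (q x - λ) / p² · u)`, after extending `q` constantly outside `[a, b]`.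
The Picard iterates `Y₀ = (c₀, c₁)`, `Y_{n+1}(x) = ∫ₐˣ A Yₙ` obey
`‖Yₙ(λ, x)‖ ≤ ‖Y₀‖ (K |x - a|)ⁿ / n!` with `K` a bound for `A` near `λ`, so their sum converges
locally uniformly in `λ` and solves the integral form of the system. Each iterate is entire in `λ`:
by the Cauchy formula the `λ`-derivative of a jointly continuous family of entire functions is
jointly continuous, which justifies differentiating under the integral sign. Uniqueness is
Grönwall's inequality for the Lipschitz field `A(λ, ·)`. -/

open MeasureTheory Set Metric Filter Function Complex Real
open scoped Interval Nat

variable {E : Type*} [NormedAddCommGroup E] [NormedSpace ℂ E]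

theorem continuous_parametric_deriv_of_differentiable [CompleteSpace E] {X : Type*}
    [TopologicalSpace X] {F : ℂ → X → E} (hF : Continuous (uncurry F))
    (hd : ∀ x, Differentiable ℂ (F · x)) :
    Continuous fun p : ℂ × X => deriv (F · p.2) p.1 := by
  have hcauchy : ∀ p : ℂ × X, deriv (F · p.2) p.1 =
      (2 * π * I)⁻¹ • ∫ θ in (0 : ℝ)..2 * π,
        (circleMap 0 1 θ)⁻¹ • I • F (p.1 + circleMap 0 1 θ) p.2 := by
    rintro ⟨μ, x⟩
    refine (eq_inv_smul_iff₀ (by simp [pi_ne_zero])).mpr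
      (((hd x).differentiableOn.deriv_eq_smul_circleIntegral zero_lt_one).symm.trans ?_)
    refine intervalIntegral.integral_congr fun θ _ => ?_
    have hshift : circleMap μ 1 θ = μ + circleMap 0 1 θ := by simp [circleMap]
    simp only [deriv_circleMap, hshift, add_sub_cancel_left, smul_smul]
    congr 1
    field_simp
  simp only [hcauchy]
  refine continuous_const.smul
    (intervalIntegral.continuous_parametric_intervalIntegral_of_continuous' ?_ _ _)
  have hc : Continuous fun θ : ℝ => circleMap 0 1 θ := continuous_circleMap 0 1
  have hF' : Continuous fun q : (ℂ × X) × ℝ => F (q.1.1 + circleMap 0 1 q.2) q.1.2 :=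
    hF.comp ((continuous_fst.fst.add (hc.comp continuous_snd)).prodMk continuous_fst.snd)
  exact ((hc.comp continuous_snd).inv₀ fun q => circleMap_ne_center one_ne_zero).smul
    (continuous_const.smul hF')

theorem differentiable_parametric_intervalIntegral [CompleteSpace E] {F : ℂ → ℝ → E}
    (hF : Continuous (uncurry F)) (hd : ∀ t, Differentiable ℂ (F · t)) (a b : ℝ) :
    Differentiable ℂ fun μ => ∫ t in a..b, F μ t := by
  intro μ₀
  have hF' := continuous_parametric_deriv_of_differentiable hF hd
  obtain ⟨C, hC⟩ := ((isCompact_closedBall μ₀ 1).prod (isCompact_uIcc (a := a) (b := b)))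
    |>.exists_bound_of_continuousOn hF'.continuousOn
  refine (intervalIntegral.hasDerivAt_integral_of_dominated_loc_of_deriv_le
    (F' := fun μ t => deriv (F · t) μ) (bound := fun _ => C) (ball_mem_nhds μ₀ one_pos)
    (Eventually.of_forall fun μ => (hF.comp (Continuous.prodMk_right μ)).aestronglyMeasurable)
    ((hF.comp (Continuous.prodMk_right μ₀)).intervalIntegrable _ _)
    (hF'.comp (Continuous.prodMk_right μ₀)).aestronglyMeasurable
    (ae_of_all _ fun t ht μ hμ => hC (μ, t) ⟨ball_subset_closedBall hμ, uIoc_subset_uIcc ht⟩)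
    intervalIntegrable_const
    (ae_of_all _ fun t _ μ _ => (hd t μ).hasDerivAt)).2.differentiableAt

theorem abs_integral_abs_sub_pow (a x : ℝ) (n : ℕ) :
    |∫ t in a..x, |t - a| ^ n| = |x - a| ^ (n + 1) / (n + 1) := by
  rw [intervalIntegral.integral_comp_sub_right (fun s => |s| ^ n), sub_self]
  rcases le_total 0 (x - a) with h | h
  · rw [intervalIntegral.integral_congr (g := fun s => s ^ n) fun s hs => by
      rw [uIcc_of_le h] at hs; simp [abs_of_nonneg hs.1], integral_pow, abs_of_nonneg h,
      zero_pow n.succ_ne_zero, sub_zero, abs_of_nonneg (by positivity)]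
  · rw [intervalIntegral.integral_congr (g := fun s => (-s) ^ n) fun s hs => by
      rw [uIcc_of_ge h] at hs; simp [abs_of_nonpos hs.2], intervalIntegral.integral_comp_neg
      (fun s => s ^ n), integral_pow, abs_of_nonpos h, neg_zero, zero_pow n.succ_ne_zero,
      zero_sub, neg_div, abs_neg, abs_of_nonneg (by have := neg_nonneg.2 h; positivity)]

section Picard

variable (A : ℂ → ℝ → E →L[ℂ] E) (a : ℝ) (y₀ : E)

noncomputable def picardTerm : ℕ → ℂ → ℝ → E
  | 0 => fun _ _ => y₀
  | n + 1 => fun μ x => ∫ t in a..x, A μ t (picardTerm n μ t)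

noncomputable def picardSeries (μ : ℂ) (x : ℝ) : E :=
  ∑' n, picardTerm A a y₀ n μ x

variable {A a y₀}

theorem continuous_picardTerm (hA : Continuous (uncurry A)) :
    ∀ n, Continuous (uncurry (picardTerm A a y₀ n))
  | 0 => continuous_const
  | n + 1 => intervalIntegral.continuous_parametric_intervalIntegral_of_continuous
      (f := fun p t => A p.1 t (picardTerm A a y₀ n p.1 t))
      ((hA.comp (continuous_fst.fst.prodMk continuous_snd)).clm_apply
        ((continuous_picardTerm hA n).comp (continuous_fst.fst.prodMk continuous_snd)))
      continuous_snd

theorem differentiable_picardTerm [CompleteSpace E] (hA : Continuous (uncurry A))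
    (hAd : ∀ t, Differentiable ℂ (A · t)) :
    ∀ n x, Differentiable ℂ (picardTerm A a y₀ n · x)
  | 0, _ => differentiable_const _
  | n + 1, x => differentiable_parametric_intervalIntegral
      (F := fun μ t => A μ t (picardTerm A a y₀ n μ t))
      ((hA.comp (continuous_fst.prodMk continuous_snd)).clm_apply (continuous_picardTerm hA n))
      (fun t => (hAd t).clm_apply (differentiable_picardTerm hA hAd n t)) a x

theorem norm_picardTerm_le {μ : ℂ} {x K : ℝ}
    (hK : ∀ t ∈ [[a, x]], ‖A μ t‖ ≤ K) (n : ℕ) :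
    ‖picardTerm A a y₀ n μ x‖ ≤ ‖y₀‖ * K ^ n * |x - a| ^ n / n ! := by
  induction n generalizing x with
  | zero => simp [picardTerm]
  | succ n ih =>
    have hK0 : 0 ≤ K := (norm_nonneg _).trans (hK a left_mem_uIcc)
    set c := ‖y₀‖ * K ^ (n + 1) / (n ! : ℝ) with hc
    have hint : ∀ t ∈ Ι a x, ‖A μ t (picardTerm A a y₀ n μ t)‖ ≤ c * |t - a| ^ n := fun t ht =>
      have ht' := uIoc_subset_uIcc ht
      ((A μ t).le_opNorm _).trans <| (mul_le_mul (hK t ht')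
        (ih fun s hs => hK s (uIcc_subset_uIcc_left ht' hs)) (norm_nonneg _) hK0).trans_eq
        (by ring)
    calc ‖picardTerm A a y₀ (n + 1) μ x‖ ≤ |∫ t in a..x, c * |t - a| ^ n| :=
          intervalIntegral.norm_integral_le_abs_of_norm_le
            ((ae_restrict_iff' measurableSet_uIoc).2 (ae_of_all _ hint))
            ((continuous_const.mul ((continuous_id.sub continuous_const).abs.pow n))
              |>.intervalIntegrable _ _)
      _ = c * (|x - a| ^ (n + 1) / (n + 1)) := by
          rw [intervalIntegral.integral_const_mul, abs_mul, abs_integral_abs_sub_pow,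
            abs_of_nonneg (by positivity)]
      _ = ‖y₀‖ * K ^ (n + 1) * |x - a| ^ (n + 1) / (n + 1)! := by
          rw [hc, Nat.factorial_succ]; push_cast; field_simp

theorem norm_picardTerm_le_of_le {μ : ℂ} {x K R : ℝ} (hK : ∀ t ∈ [[a, x]], ‖A μ t‖ ≤ K)
    (hR : |x - a| ≤ R) (n : ℕ) :
    ‖picardTerm A a y₀ n μ x‖ ≤ ‖y₀‖ * ((K * R) ^ n / n !) := by
  have hK0 : 0 ≤ K := (norm_nonneg _).trans (hK a left_mem_uIcc)
  calc ‖picardTerm A a y₀ n μ x‖ ≤ ‖y₀‖ * K ^ n * |x - a| ^ n / n ! := norm_picardTerm_le hK n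
    _ ≤ ‖y₀‖ * K ^ n * R ^ n / n ! := by gcongr
    _ = ‖y₀‖ * ((K * R) ^ n / n !) := by ring

variable [CompleteSpace E]

theorem summable_picardTerm (hA : Continuous (uncurry A)) (μ : ℂ) (x : ℝ) :
    Summable fun n => picardTerm A a y₀ n μ x := by
  obtain ⟨K, hK⟩ := (isCompact_uIcc (a := a) (b := x)).exists_bound_of_continuousOn
    (hA.comp (Continuous.prodMk_right μ)).continuousOn
  exact .of_norm_bounded ((Real.summable_pow_div_factorial _).mul_left _)
    (norm_picardTerm_le_of_le hK le_rfl)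

theorem picardSeries_eq (hA : Continuous (uncurry A)) (μ : ℂ) (x : ℝ) :
    picardSeries A a y₀ μ x = y₀ + ∫ t in a..x, A μ t (picardSeries A a y₀ μ t) := by
  obtain ⟨K, hK⟩ := (isCompact_uIcc (a := a) (b := x)).exists_bound_of_continuousOn
    (hA.comp (Continuous.prodMk_right μ)).continuousOn
  have hK0 : 0 ≤ K := (norm_nonneg _).trans (hK a left_mem_uIcc)
  have hbound : ∀ n, ∀ t ∈ Ι a x,
      ‖A μ t (picardTerm A a y₀ n μ t)‖ ≤ K * (‖y₀‖ * ((K * |x - a|) ^ n / n !)) := fun n t ht =>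
    have ht' := uIoc_subset_uIcc ht
    ((A μ t).le_opNorm _).trans <| mul_le_mul (hK t ht')
      (norm_picardTerm_le_of_le (fun s hs => hK s (uIcc_subset_uIcc_left ht' hs))
        (abs_sub_left_of_mem_uIcc ht') n) (norm_nonneg _) hK0
  have htail : HasSum (fun n => picardTerm A a y₀ (n + 1) μ x)
      (∫ t in a..x, A μ t (picardSeries A a y₀ μ t)) :=
    intervalIntegral.hasSum_integral_of_dominated_convergence _
      (fun n => ((hA.comp (Continuous.prodMk_right μ)).clm_apply
        ((continuous_picardTerm hA n).comp (Continuous.prodMk_right μ))).aestronglyMeasurable)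
      (fun n => ae_of_all _ (hbound n))
      (ae_of_all _ fun _ _ => ((Real.summable_pow_div_factorial _).mul_left _).mul_left _)
      intervalIntegrable_const
      (ae_of_all _ fun t _ => (summable_picardTerm hA μ t).hasSum.mapL (A μ t))
  rw [picardSeries, (summable_picardTerm hA μ x).tsum_eq_zero_add, htail.tsum_eq]
  rfl

theorem picardSeries_self (hA : Continuous (uncurry A)) (μ : ℂ) :
    picardSeries A a y₀ μ a = y₀ := by
  simp [picardSeries_eq hA μ a]

theorem continuous_picardSeries (hA : Continuous (uncurry A)) (μ : ℂ) :
    Continuous (picardSeries A a y₀ μ) := by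
  refine continuous_iff_continuousAt.2 fun x₀ => ?_
  set R := |x₀ - a| + 1
  obtain ⟨K, hK⟩ := isCompact_Icc.exists_bound_of_continuousOn
    (hA.comp (Continuous.prodMk_right μ)).continuousOn (s := Icc (a - R) (a + R))
  have hR : 0 ≤ R := by positivity
  have hcont : ContinuousOn (picardSeries A a y₀ μ) (Icc (a - R) (a + R)) :=
    continuousOn_tsum (fun n => ((continuous_picardTerm hA n).comp
      (Continuous.prodMk_right μ)).continuousOn) ((Real.summable_pow_div_factorial _).mul_left _)
      fun n x hx => norm_picardTerm_le_of_le (R := R)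
        (fun t ht => hK t (ordConnected_Icc.uIcc_subset ⟨by linarith, by linarith⟩ hx ht))
        (abs_sub_le_iff.2 ⟨by linarith [hx.2], by linarith [hx.1]⟩) n
  obtain ⟨hx₀, hx₀'⟩ := abs_sub_lt_iff.1 (lt_add_one |x₀ - a|)
  exact hcont.continuousAt (Icc_mem_nhds (by linarith) (by linarith))

theorem hasDerivAt_picardSeries (hA : Continuous (uncurry A)) (μ : ℂ) (x : ℝ) :
    HasDerivAt (picardSeries A a y₀ μ) (A μ x (picardSeries A a y₀ μ x)) x := by
  have hint : Continuous fun t => A μ t (picardSeries A a y₀ μ t) :=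
    (hA.comp (Continuous.prodMk_right μ)).clm_apply (continuous_picardSeries hA μ)
  have h := (hint.integral_hasStrictDerivAt a x).hasDerivAt.const_add y₀
  rwa [← funext (picardSeries_eq hA μ)] at h

theorem differentiable_picardSeries (hA : Continuous (uncurry A))
    (hAd : ∀ t, Differentiable ℂ (A · t)) (x : ℝ) :
    Differentiable ℂ (picardSeries A a y₀ · x) := by
  intro μ₀
  obtain ⟨K, hK⟩ := ((isCompact_closedBall μ₀ 1).prod (isCompact_uIcc (a := a) (b := x)))
    |>.exists_bound_of_continuousOn hA.continuousOn
  have hdiff : DifferentiableOn ℂ (picardSeries A a y₀ · x) (ball μ₀ 1) :=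
    Complex.differentiableOn_tsum_of_summable_norm
      ((Real.summable_pow_div_factorial _).mul_left _)
      (fun n => (differentiable_picardTerm hA hAd n x).differentiableOn) isOpen_ball
      fun n μ hμ => norm_picardTerm_le_of_le
        (fun t ht => hK (μ, t) ⟨ball_subset_closedBall hμ, ht⟩) le_rfl n
  exact hdiff.differentiableAt (ball_mem_nhds μ₀ one_pos)

end Picard

theorem ODE_solution_unique_of_linear {B : ℝ → E →L[ℂ] E} {a b : ℝ} (hB : ContinuousOn B (Icc a b))
    {f g : ℝ → E} (hf : ∀ t ∈ Icc a b, HasDerivAt f (B t (f t)) t)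
    (hg : ∀ t ∈ Icc a b, HasDerivAt g (B t (g t)) t) (ha : f a = g a) :
    EqOn f g (Icc a b) := by
  obtain ⟨K, hK⟩ := isCompact_Icc.exists_bound_of_continuousOn hB
  exact ODE_solution_unique_of_mem_Icc_right (K := K.toNNReal) (s := fun _ => univ)
    (fun t ht => ((B t).lipschitz.weaken
      (norm_toNNReal.symm.trans_le (Real.toNNReal_le_toNNReal (hK t (Ico_subset_Icc_self ht)))))
      |>.lipschitzOnWith)
    (HasDerivAt.continuousOn hf) (fun t ht => (hf t (Ico_subset_Icc_self ht)).hasDerivWithinAt)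
    (fun _ _ => trivial) (HasDerivAt.continuousOn hg)
    (fun t ht => (hg t (Ico_subset_Icc_self ht)).hasDerivWithinAt) (fun _ _ => trivial) ha

noncomputable def companionCLM (g : ℂ) : ℂ × ℂ →L[ℂ] ℂ × ℂ :=
  .inl ℂ ℂ ℂ ∘L .snd ℂ ℂ ℂ + g • (.inr ℂ ℂ ℂ ∘L .fst ℂ ℂ ℂ)

theorem companionCLM_apply (g : ℂ) (y : ℂ × ℂ) : companionCLM g y = (y.2, g * y.1) := by
  simp [companionCLM]

theorem continuous_companionCLM : Continuous companionCLM :=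
  continuous_const.add (continuous_id.smul continuous_const)

theorem differentiable_companionCLM : Differentiable ℂ companionCLM :=
  (differentiable_const _).add (differentiable_id.smul_const _)

theorem hasDerivAt_prodMk_iff_companionCLM {u u' : ℝ → ℂ} {g : ℂ} {x : ℝ} :
    HasDerivAt (fun t => (u t, u' t)) (companionCLM g (u x, u' x)) x ↔
      HasDerivAt u (u' x) x ∧ HasDerivAt u' (g * u x) x := by
  rw [companionCLM_apply]
  refine ⟨fun h => ⟨?_, ?_⟩, fun h => h.1.prodMk h.2⟩
  · exact hasFDerivAt_fst.comp_hasDerivAt x h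
  · exact hasFDerivAt_snd.comp_hasDerivAt x h

theorem stmt_11_general (a b : ℝ) (hab : a < b) (p : ℝ)
    (q : ℝ → ℝ) (hq : ContinuousOn q (Set.Icc a b)) (c₀ c₁ : ℂ) :
    ∃ u u' : ℂ → ℝ → ℂ,
      (∀ lam : ℂ,
        u lam a = c₀ ∧ u' lam a = c₁ ∧
        (∀ x ∈ Set.Icc a b, HasDerivAt (u lam) (u' lam x) x) ∧
        (∀ x ∈ Set.Icc a b,
          HasDerivAt (u' lam) ((((q x : ℂ) - lam) / (p : ℂ) ^ 2) * u lam x) x)) ∧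
      (∀ (lam : ℂ) (v v' : ℝ → ℂ),
        v a = c₀ → v' a = c₁ →
        (∀ x ∈ Set.Icc a b, HasDerivAt v (v' x) x) →
        (∀ x ∈ Set.Icc a b,
          HasDerivAt v' ((((q x : ℂ) - lam) / (p : ℂ) ^ 2) * v x) x) →
        ∀ x ∈ Set.Icc a b, v x = u lam x) ∧
      (∀ x ∈ Set.Icc a b, ∀ lam : ℂ, DifferentiableAt ℂ (fun μ => u μ x) lam) := by
  set Q : ℝ → ℝ := IccExtend hab.le ((Icc a b).domRestrict q)
  have hQ : Continuous Q := hq.domRestrict.Icc_extend'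
  have hQq : ∀ x ∈ Icc a b, Q x = q x := fun x hx => IccExtend_of_mem hab.le _ hx
  set A : ℂ → ℝ → ℂ × ℂ →L[ℂ] ℂ × ℂ := fun μ t => companionCLM ((Q t - μ) / p ^ 2)
  have hA : Continuous (uncurry A) := continuous_companionCLM.comp (by fun_prop)
  have hAd : ∀ t, Differentiable ℂ (A · t) := fun t =>
    differentiable_companionCLM.comp (by fun_prop)
  set Y := picardSeries A a (c₀, c₁)
  have hY : ∀ lam x, HasDerivAt (fun t => (Y lam t).1) (Y lam x).2 x ∧
      HasDerivAt (fun t => (Y lam t).2) ((Q x - lam) / p ^ 2 * (Y lam x).1) x := fun lam x =>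
    hasDerivAt_prodMk_iff_companionCLM.1 (hasDerivAt_picardSeries hA lam x)
  have hYa : ∀ lam, Y lam a = (c₀, c₁) := picardSeries_self hA
  refine ⟨fun lam x => (Y lam x).1, fun lam x => (Y lam x).2, fun lam => ?_, ?_,
    fun x _ lam => (differentiable_picardSeries hA hAd x lam).fst⟩
  · refine ⟨congrArg Prod.fst (hYa lam), congrArg Prod.snd (hYa lam), fun x _ => (hY lam x).1,
      fun x hx => ?_⟩
    simpa only [hQq x hx] using (hY lam x).2
  · intro lam v v' hva hv'a hv hv' x hx
    have hvY := ODE_solution_unique_of_linear (hA.comp (Continuous.prodMk_right lam)).continuousOn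
      (f := fun t => (v t, v' t)) (g := Y lam)
      (fun t ht => hasDerivAt_prodMk_iff_companionCLM.2
        ⟨hv t ht, by simpa only [hQq t ht] using hv' t ht⟩)
      (fun t _ => hasDerivAt_picardSeries hA lam t) (by rw [hYa, hva, hv'a]) hx
    exact congrArg Prod.fst hvY

/-- the initial value problem `-p² u'' + q u = λ u` on `[a,b]`,
`u(a) = c₀`, `u'(a) = c₁` (with `p ≠ 0` real, `q` continuous, `λ ∈ ℂ`) has a unique
solution `u(·,λ)`, and for each fixed `x ∈ [a,b]` the map `λ ↦ u(x,λ)` is entire. -/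
theorem stmt_11 (a b : ℝ) (hab : a < b) (p : ℝ) (hp : p ≠ 0)
    (q : ℝ → ℝ) (hq : ContinuousOn q (Set.Icc a b)) (c₀ c₁ : ℂ) :
    ∃ u u' : ℂ → ℝ → ℂ,
      (∀ lam : ℂ,
        u lam a = c₀ ∧ u' lam a = c₁ ∧
        (∀ x ∈ Set.Icc a b, HasDerivAt (u lam) (u' lam x) x) ∧
        (∀ x ∈ Set.Icc a b,
          HasDerivAt (u' lam) ((((q x : ℂ) - lam) / (p : ℂ) ^ 2) * u lam x) x)) ∧
      (∀ (lam : ℂ) (v v' : ℝ → ℂ),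
        v a = c₀ → v' a = c₁ →
        (∀ x ∈ Set.Icc a b, HasDerivAt v (v' x) x) →
        (∀ x ∈ Set.Icc a b,
          HasDerivAt v' ((((q x : ℂ) - lam) / (p : ℂ) ^ 2) * v x) x) →
        ∀ x ∈ Set.Icc a b, v x = u lam x) ∧
      (∀ x ∈ Set.Icc a b, ∀ lam : ℂ, DifferentiableAt ℂ (fun μ => u μ x) lam) :=
  stmt_11_general a b hab p q hq c₀ c₁
end

section
/- Suppose f and g are solutions on [-1,1] (away from interior points h₁ < h₂ < h₃) of the same piecewise Sturm-Liouville equation -p(x)² u'' + q u = λ u, both satisfy the boundary condition α₁ u(-1) + α₂ u'(-1) = 0 with (α₁,α₂) ≠ (0,0), and both satisfy the same transmission conditions u(hᵢ+) = α u(hᵢ-) + β u'(hᵢ-), u'(hᵢ+) = γ u(hᵢ-) + δ u'(hᵢ-) at each hᵢ, with the transmission matrices invertible. Then f and g are linearly dependent: f = K g on [-1,1] for some constant K. In particular every eigenvalue of the boundary-transmission problem is geometrically simple. -/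
/-!
On each subinterval the equation reads `u'' = m u` with `m = (q - λ)/p²` continuous, so the
first-order system `(u, u')' = (u', m u)` is uniformly Lipschitz in the state and its solutions are
determined by their initial data (Grönwall). The boundary condition cuts out a line of initial data
at `-1`, so `(f, f')(-1) = K (g, g')(-1)`; uniqueness gives `f = K g` on the first piece, the
(linear) transmission conditions carry the proportionality of `(f, f')` to the next one, and so on.
-/

/-- `u` (with derivative `u'`) solves `-p² u'' + q u = lam·u` on `[c,d]`. -/
def SLSol (p : ℝ) (q : ℝ → ℝ) (lam : ℂ) (c d : ℝ) (u u' : ℝ → ℂ) : Prop :=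
  ∀ x ∈ Set.Icc c d,
    HasDerivAt u (u' x) x ∧
    HasDerivAt u' ((((q x : ℂ) - lam) / (p : ℂ) ^ 2) * u x) x

open Set

def IsLinearODE2Sol (m : ℝ → ℂ) (c d : ℝ) (u u' : ℝ → ℂ) : Prop :=
  ∀ x ∈ Icc c d, HasDerivAt u (u' x) x ∧ HasDerivAt u' (m x * u x) x

lemma lipschitzWith_companion (a : ℂ) :
    LipschitzWith (max 1 ‖a‖₊) fun y : ℂ × ℂ => (y.2, a * y.1) :=
  LipschitzWith.prod_snd.prodMk <|
    ((lipschitzWith_smul a).comp LipschitzWith.prod_fst).weaken (by simp)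

namespace IsLinearODE2Sol

variable {m : ℝ → ℂ} {c d : ℝ} {u u' w w' : ℝ → ℂ}

lemma hasDerivWithinAt_prod (hu : IsLinearODE2Sol m c d u u') {t : ℝ} (ht : t ∈ Icc c d) :
    HasDerivWithinAt (fun x => (u x, u' x)) ((u' t, m t * u t)) (Ici t) t :=
  ((hu t ht).1.prodMk (hu t ht).2).hasDerivWithinAt

lemma continuousOn_prod (hu : IsLinearODE2Sol m c d u u') :
    ContinuousOn (fun x => (u x, u' x)) (Icc c d) := fun t ht =>
  ((hu t ht).1.prodMk (hu t ht).2).continuousAt.continuousWithinAt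

theorem eqOn (hm : ContinuousOn m (Icc c d)) (hu : IsLinearODE2Sol m c d u u')
    (hw : IsLinearODE2Sol m c d w w') (h₀ : u c = w c) (h₀' : u' c = w' c) :
    EqOn (fun x => (u x, u' x)) (fun x => (w x, w' x)) (Icc c d) := by
  obtain ⟨M, hM⟩ := isCompact_Icc.exists_bound_of_continuousOn hm
  have hlip : ∀ t ∈ Ico c d, LipschitzOnWith (max 1 M.toNNReal)
      (fun y : ℂ × ℂ => (y.2, m t * y.1)) univ := fun t ht =>
    ((lipschitzWith_companion (m t)).weaken <| max_le_max le_rfl <| by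
      simpa [← NNReal.coe_le_coe] using (hM t (Ico_subset_Icc_self ht)).trans (le_max_left M 0)
      ).lipschitzOnWith
  exact ODE_solution_unique_of_mem_Icc_right hlip hu.continuousOn_prod
    (fun t ht => hu.hasDerivWithinAt_prod (Ico_subset_Icc_self ht)) (fun _ _ => trivial)
    hw.continuousOn_prod (fun t ht => hw.hasDerivWithinAt_prod (Ico_subset_Icc_self ht))
    (fun _ _ => trivial) (by simp [h₀, h₀'])

lemma const_mul (hu : IsLinearODE2Sol m c d u u') (K : ℂ) :
    IsLinearODE2Sol m c d (fun x => K * u x) (fun x => K * u' x) := fun x hx =>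
  ⟨(hu x hx).1.const_mul K, by simpa only [mul_left_comm] using (hu x hx).2.const_mul K⟩

end IsLinearODE2Sol

theorem SLSol.eq_const_mul {p : ℝ} {q : ℝ → ℝ} {lam : ℂ} {c d : ℝ} {f f' g g' : ℝ → ℂ}
    (hq : Continuous q) (hf : SLSol p q lam c d f f') (hg : SLSol p q lam c d g g') {K : ℂ}
    (h₀ : f c = K * g c) (h₀' : f' c = K * g' c) :
    ∀ x ∈ Icc c d, f x = K * g x ∧ f' x = K * g' x := fun x hx =>
  Prod.ext_iff.mp <| IsLinearODE2Sol.eqOn (by fun_prop) hf (IsLinearODE2Sol.const_mul hg K)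
    h₀ h₀' hx

lemma mul_sub_mul_eq_zero_of_dot_eq_zero {F : Type*} [CommRing F] [IsDomain F] {a b x y x' y' : F}
    (hab : ¬(a = 0 ∧ b = 0)) (h : a * x + b * y = 0) (h' : a * x' + b * y' = 0) :
    x * y' - y * x' = 0 := by
  by_cases ha : a = 0
  · have hb : b ≠ 0 := fun hb => hab ⟨ha, hb⟩
    refine (mul_eq_zero.mp ?_).resolve_left hb
    linear_combination x * h' - x' * h
  · refine (mul_eq_zero.mp ?_).resolve_left ha
    linear_combination y' * h - y * h'

lemma exists_eq_mul_of_mul_sub_mul_eq_zero {F : Type*} [Field F] {x y x' y' : F}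
    (h : x * y' - y * x' = 0) (hne : ¬(x' = 0 ∧ y' = 0)) :
    ∃ K, x = K * x' ∧ y = K * y' := by
  by_cases hx' : x' = 0
  · have hy' : y' ≠ 0 := fun hy' => hne ⟨hx', hy'⟩
    subst hx'
    refine ⟨y / y', ?_, by field_simp⟩
    simpa [hy'] using h
  · refine ⟨x / x', by field_simp, ?_⟩
    field_simp
    linear_combination -h


theorem stmt_12_general (h₁ h₂ h₃ : ℝ) (hh0 : -1 < h₁) (hh1 : h₁ < h₂) (hh2 : h₂ < h₃)
    (p₁ p₂ p₃ p₄ : ℝ)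
    (q : ℝ → ℝ) (hq : Continuous q) (lam : ℂ)
    (α₁ α₂ : ℝ) (hα : ¬(α₁ = 0 ∧ α₂ = 0))
    -- transmission coefficients at h₁, h₂, h₃ with invertible matrices
    (a₁ b₁ c₁ d₁ a₂ b₂ c₂ d₂ a₃ b₃ c₃ d₃ : ℝ)
    (f₁ f₁' f₂ f₂' f₃ f₃' f₄ f₄' g₁ g₁' g₂ g₂' g₃ g₃' g₄ g₄' : ℝ → ℂ)
    -- f solves the equation piecewise
    (hf₁ : SLSol p₁ q lam (-1) h₁ f₁ f₁') (hf₂ : SLSol p₂ q lam h₁ h₂ f₂ f₂')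
    (hf₃ : SLSol p₃ q lam h₂ h₃ f₃ f₃') (hf₄ : SLSol p₄ q lam h₃ 1 f₄ f₄')
    -- g solves the equation piecewise
    (hg₁ : SLSol p₁ q lam (-1) h₁ g₁ g₁') (hg₂ : SLSol p₂ q lam h₁ h₂ g₂ g₂')
    (hg₃ : SLSol p₃ q lam h₂ h₃ g₃ g₃') (hg₄ : SLSol p₄ q lam h₃ 1 g₄ g₄')
    -- boundary conditions at -1
    (hbf : (α₁ : ℂ) * f₁ (-1) + (α₂ : ℂ) * f₁' (-1) = 0)
    (hbg : (α₁ : ℂ) * g₁ (-1) + (α₂ : ℂ) * g₁' (-1) = 0)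
    -- g is a nontrivial solution (an eigenfunction)
    (hgnt : ¬(g₁ (-1) = 0 ∧ g₁' (-1) = 0))
    -- transmission conditions for f
    (htf₁ : f₂ h₁ = (a₁ : ℂ) * f₁ h₁ + (b₁ : ℂ) * f₁' h₁)
    (htf₁' : f₂' h₁ = (c₁ : ℂ) * f₁ h₁ + (d₁ : ℂ) * f₁' h₁)
    (htf₂ : f₃ h₂ = (a₂ : ℂ) * f₂ h₂ + (b₂ : ℂ) * f₂' h₂)
    (htf₂' : f₃' h₂ = (c₂ : ℂ) * f₂ h₂ + (d₂ : ℂ) * f₂' h₂)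
    (htf₃ : f₄ h₃ = (a₃ : ℂ) * f₃ h₃ + (b₃ : ℂ) * f₃' h₃)
    (htf₃' : f₄' h₃ = (c₃ : ℂ) * f₃ h₃ + (d₃ : ℂ) * f₃' h₃)
    -- transmission conditions for g
    (htg₁ : g₂ h₁ = (a₁ : ℂ) * g₁ h₁ + (b₁ : ℂ) * g₁' h₁)
    (htg₁' : g₂' h₁ = (c₁ : ℂ) * g₁ h₁ + (d₁ : ℂ) * g₁' h₁)
    (htg₂ : g₃ h₂ = (a₂ : ℂ) * g₂ h₂ + (b₂ : ℂ) * g₂' h₂)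
    (htg₂' : g₃' h₂ = (c₂ : ℂ) * g₂ h₂ + (d₂ : ℂ) * g₂' h₂)
    (htg₃ : g₄ h₃ = (a₃ : ℂ) * g₃ h₃ + (b₃ : ℂ) * g₃' h₃)
    (htg₃' : g₄' h₃ = (c₃ : ℂ) * g₃ h₃ + (d₃ : ℂ) * g₃' h₃) :
    ∃ K : ℂ,
      (∀ x ∈ Set.Icc (-1 : ℝ) h₁, f₁ x = K * g₁ x) ∧
      (∀ x ∈ Set.Icc h₁ h₂, f₂ x = K * g₂ x) ∧
      (∀ x ∈ Set.Icc h₂ h₃, f₃ x = K * g₃ x) ∧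
      (∀ x ∈ Set.Icc h₃ (1 : ℝ), f₄ x = K * g₄ x) := by
  have hα' : ¬((α₁ : ℂ) = 0 ∧ (α₂ : ℂ) = 0) := by exact_mod_cast hα
  obtain ⟨K, h₀, h₀'⟩ := exists_eq_mul_of_mul_sub_mul_eq_zero
    (mul_sub_mul_eq_zero_of_dot_eq_zero hα' hbf hbg) hgnt
  have e₁ := hf₁.eq_const_mul hq hg₁ h₀ h₀'
  obtain ⟨e₁h, e₁h'⟩ := e₁ h₁ ⟨hh0.le, le_rfl⟩
  have e₂ := hf₂.eq_const_mul hq hg₂ (K := K)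
    (by rw [htf₁, htg₁, e₁h, e₁h']; ring) (by rw [htf₁', htg₁', e₁h, e₁h']; ring)
  obtain ⟨e₂h, e₂h'⟩ := e₂ h₂ ⟨hh1.le, le_rfl⟩
  have e₃ := hf₃.eq_const_mul hq hg₃ (K := K)
    (by rw [htf₂, htg₂, e₂h, e₂h']; ring) (by rw [htf₂', htg₂', e₂h, e₂h']; ring)
  obtain ⟨e₃h, e₃h'⟩ := e₃ h₃ ⟨hh2.le, le_rfl⟩
  have e₄ := hf₄.eq_const_mul hq hg₄ (K := K)
    (by rw [htf₃, htg₃, e₃h, e₃h']; ring) (by rw [htf₃', htg₃', e₃h, e₃h']; ring)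
  exact ⟨K, fun x hx => (e₁ x hx).1, fun x hx => (e₂ x hx).1,
    fun x hx => (e₃ x hx).1, fun x hx => (e₄ x hx).1⟩

/-- two solutions `f`, `g` (represented by their restrictions to the
four subintervals cut by `h₁ < h₂ < h₃`) of the same piecewise Sturm–Liouville
equation, satisfying the same boundary condition `α₁u(-1) + α₂u'(-1) = 0` with
`(α₁,α₂) ≠ (0,0)` and the same transmission conditions with invertible transmission
matrices at `h₁, h₂, h₃`, are linearly dependent: `f = K·g` on all of `[-1,1]`
(so each eigenvalue is geometrically simple). -/
theorem stmt_12 (h₁ h₂ h₃ : ℝ) (hh0 : -1 < h₁) (hh1 : h₁ < h₂) (hh2 : h₂ < h₃) (hh3 : h₃ < 1)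
    (p₁ p₂ p₃ p₄ : ℝ) (hp₁ : p₁ ≠ 0) (hp₂ : p₂ ≠ 0) (hp₃ : p₃ ≠ 0) (hp₄ : p₄ ≠ 0)
    (q : ℝ → ℝ) (hq : Continuous q) (lam : ℂ)
    (α₁ α₂ : ℝ) (hα : ¬(α₁ = 0 ∧ α₂ = 0))
    -- transmission coefficients at h₁, h₂, h₃ with invertible matrices
    (a₁ b₁ c₁ d₁ a₂ b₂ c₂ d₂ a₃ b₃ c₃ d₃ : ℝ)
    (hdet₁ : a₁ * d₁ - b₁ * c₁ ≠ 0) (hdet₂ : a₂ * d₂ - b₂ * c₂ ≠ 0)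
    (hdet₃ : a₃ * d₃ - b₃ * c₃ ≠ 0)
    (f₁ f₁' f₂ f₂' f₃ f₃' f₄ f₄' g₁ g₁' g₂ g₂' g₃ g₃' g₄ g₄' : ℝ → ℂ)
    -- f solves the equation piecewise
    (hf₁ : SLSol p₁ q lam (-1) h₁ f₁ f₁') (hf₂ : SLSol p₂ q lam h₁ h₂ f₂ f₂')
    (hf₃ : SLSol p₃ q lam h₂ h₃ f₃ f₃') (hf₄ : SLSol p₄ q lam h₃ 1 f₄ f₄')
    -- g solves the equation piecewise
    (hg₁ : SLSol p₁ q lam (-1) h₁ g₁ g₁') (hg₂ : SLSol p₂ q lam h₁ h₂ g₂ g₂')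
    (hg₃ : SLSol p₃ q lam h₂ h₃ g₃ g₃') (hg₄ : SLSol p₄ q lam h₃ 1 g₄ g₄')
    -- boundary conditions at -1
    (hbf : (α₁ : ℂ) * f₁ (-1) + (α₂ : ℂ) * f₁' (-1) = 0)
    (hbg : (α₁ : ℂ) * g₁ (-1) + (α₂ : ℂ) * g₁' (-1) = 0)
    -- g is a nontrivial solution (an eigenfunction)
    (hgnt : ¬(g₁ (-1) = 0 ∧ g₁' (-1) = 0))
    -- transmission conditions for f
    (htf₁ : f₂ h₁ = (a₁ : ℂ) * f₁ h₁ + (b₁ : ℂ) * f₁' h₁)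
    (htf₁' : f₂' h₁ = (c₁ : ℂ) * f₁ h₁ + (d₁ : ℂ) * f₁' h₁)
    (htf₂ : f₃ h₂ = (a₂ : ℂ) * f₂ h₂ + (b₂ : ℂ) * f₂' h₂)
    (htf₂' : f₃' h₂ = (c₂ : ℂ) * f₂ h₂ + (d₂ : ℂ) * f₂' h₂)
    (htf₃ : f₄ h₃ = (a₃ : ℂ) * f₃ h₃ + (b₃ : ℂ) * f₃' h₃)
    (htf₃' : f₄' h₃ = (c₃ : ℂ) * f₃ h₃ + (d₃ : ℂ) * f₃' h₃)
    -- transmission conditions for g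
    (htg₁ : g₂ h₁ = (a₁ : ℂ) * g₁ h₁ + (b₁ : ℂ) * g₁' h₁)
    (htg₁' : g₂' h₁ = (c₁ : ℂ) * g₁ h₁ + (d₁ : ℂ) * g₁' h₁)
    (htg₂ : g₃ h₂ = (a₂ : ℂ) * g₂ h₂ + (b₂ : ℂ) * g₂' h₂)
    (htg₂' : g₃' h₂ = (c₂ : ℂ) * g₂ h₂ + (d₂ : ℂ) * g₂' h₂)
    (htg₃ : g₄ h₃ = (a₃ : ℂ) * g₃ h₃ + (b₃ : ℂ) * g₃' h₃)
    (htg₃' : g₄' h₃ = (c₃ : ℂ) * g₃ h₃ + (d₃ : ℂ) * g₃' h₃) :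
    ∃ K : ℂ,
      (∀ x ∈ Set.Icc (-1 : ℝ) h₁, f₁ x = K * g₁ x) ∧
      (∀ x ∈ Set.Icc h₁ h₂, f₂ x = K * g₂ x) ∧
      (∀ x ∈ Set.Icc h₂ h₃, f₃ x = K * g₃ x) ∧
      (∀ x ∈ Set.Icc h₃ (1 : ℝ), f₄ x = K * g₄ x) :=
  stmt_12_general h₁ h₂ h₃ hh0 hh1 hh2 p₁ p₂ p₃ p₄ q hq lam α₁ α₂ hα a₁ b₁ c₁ d₁ a₂ b₂ c₂ d₂ a₃ b₃
    c₃ d₃ f₁ f₁' f₂ f₂' f₃ f₃' f₄ f₄' g₁ g₁' g₂ g₂' g₃ g₃' g₄ g₄' hf₁ hf₂ hf₃ hf₄ hg₁ hg₂ hg₃ hg₄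
    hbf hbg hgnt htf₁ htf₁' htf₂ htf₂' htf₃ htf₃' htg₁ htg₁' htg₂ htg₂' htg₃ htg₃'
end
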